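/- arXiv:2112.04464 — 6 statements merged into one kernel-verified Lean document; each statement's English description precedes it below -/
import Mathlib

section
/- For all integers 1 ≤ d ≤ n-1 and 0 ≤ a ≤ d-1, one has C(n-1,d) * ∑_{j=0}^{d} (-1)^j * C(d-a,j) * C(n-d+a, d-j) / C(n-1, d-j) = 0, and for a = d the same sum equals C(n,d). -/
/-!
Put `m = n - 1`, `N = d - a` and `b = n - d + a = m + 1 - N`. For `k ≤ m`,
`C(b, k) / C(m, k) = (m - k)^{\underline{N-1}} / m^{\underline{N-1}}`, so with `k = d - j` the
`j`-th summand is `(-1)^j C(N, j)` times a polynomial of degree `N - 1` in `j`. For `a < d` the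
sum is therefore, up to sign, an `N`-th forward difference of a polynomial of degree `< N`, which
vanishes. For `a = d` only the term `j = 0` survives.
-/

open Finset Polynomial Nat

theorem Polynomial.sum_range_alternating_choose_mul_eval_eq_zero {R : Type*} [CommRing R]
    {P : R[X]} {N M : ℕ} (hP : P.natDegree < N) (hNM : N ≤ M) :
    ∑ j ∈ range (M + 1), (-1 : R) ^ j * N.choose j * P.eval (j : R) = 0 := by
  have hfwd := congr_fun (fwdDiff_iter_eq_zero_of_degree_lt hP) 0
  rw [fwdDiff_iter_eq_sum_shift, Pi.zero_apply] at hfwd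
  have hrange : ∑ j ∈ range (M + 1), (-1 : R) ^ j * N.choose j * P.eval (j : R)
      = ∑ j ∈ range (N + 1), (-1 : R) ^ j * N.choose j * P.eval (j : R) := by
    refine (sum_subset (range_subset_range.mpr (by omega)) fun j _ hj ↦ ?_).symm
    rw [Nat.choose_eq_zero_of_lt (by simpa using hj)]
    simp
  rw [hrange, ← mul_zero ((-1 : R) ^ N), ← hfwd, mul_sum]
  refine sum_congr rfl fun j hj ↦ ?_
  obtain ⟨i, rfl⟩ := Nat.exists_eq_add_of_le (Nat.lt_succ_iff.mp (mem_range.mp hj))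
  simp only [zsmul_eq_mul, nsmul_eq_mul, mul_one, zero_add, Nat.add_sub_cancel_left]
  push_cast
  have hsq : ((-1 : R) ^ i) ^ 2 = 1 := by rw [← pow_mul, pow_mul', neg_one_sq, one_pow]
  linear_combination (-(-1 : R) ^ j * ((j + i).choose j : R) * P.eval (j : R)) * hsq

theorem Nat.choose_mul_descFactorial_sub {b m : ℕ} (hbm : b ≤ m) (k : ℕ) :
    b.choose k * m.descFactorial (m - b) = m.choose k * (m - k).descFactorial (m - b) := by
  rcases lt_or_ge b k with hbk | hkb
  · rcases lt_or_ge m k with hmk | hkm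
    · rw [choose_eq_zero_of_lt hbk, choose_eq_zero_of_lt hmk, zero_mul, zero_mul]
    · rw [choose_eq_zero_of_lt hbk, (m - k).descFactorial_eq_zero_iff_lt.mpr (by omega), zero_mul,
        mul_zero]
  · have hsymm : (m - k).choose (b - k) = (m - k).choose (m - b) := by
      rw [← choose_symm (by omega)]; congr 1; omega
    rw [descFactorial_eq_factorial_mul_choose, descFactorial_eq_factorial_mul_choose,
      choose_symm hbm, ← hsymm]
    calc b.choose k * ((m - b)! * m.choose b)
        = (m - b)! * (m.choose b * b.choose k) := by ring
      _ = (m - b)! * (m.choose k * (m - k).choose (b - k)) := by rw [choose_mul hkb]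
      _ = _ := by ring

theorem Nat.cast_choose_div_cast_choose {K : Type*} [Field K] [CharZero K] {b m k : ℕ}
    (hbm : b ≤ m) (hkm : k ≤ m) :
    (b.choose k : K) / m.choose k = (m - k).descFactorial (m - b) / m.descFactorial (m - b) := by
  rw [div_eq_div_iff (by exact_mod_cast (choose_pos hkm).ne')
    (by exact_mod_cast (descFactorial_pos.mpr (sub_le m b)).ne')]
  exact_mod_cast (choose_mul_descFactorial_sub hbm k).trans (mul_comm _ _)

theorem binomial_identity_general (n d a : ℕ) (hdn : d ≤ n - 1) (ha : a ≤ d) :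
    ((n - 1).choose d : ℚ) *
      ∑ j ∈ Finset.range (d + 1),
        (-1 : ℚ) ^ j * ((d - a).choose j : ℚ) * ((n - d + a).choose (d - j) : ℚ) /
          ((n - 1).choose (d - j) : ℚ)
    = if a = d then (n.choose d : ℚ) else 0 := by
  rcases ha.eq_or_lt with rfl | had
  · rw [if_pos rfl, Nat.sub_self, sum_range_succ', sum_eq_zero fun j _ ↦ by simp,
      Nat.sub_add_cancel (show a ≤ n by omega)]
    have : ((n - 1).choose a : ℚ) ≠ 0 := by exact_mod_cast (choose_pos hdn).ne'
    simpa using mul_div_cancel₀ _ this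
  · obtain ⟨m, rfl⟩ : ∃ m, n = m + 1 := ⟨n - 1, by omega⟩
    rw [Nat.add_sub_cancel] at hdn ⊢
    rw [if_neg had.ne]
    set N := d - a
    set P : ℚ[X] := (descPochhammer ℚ (N - 1)).comp (X + C ((m - d : ℕ) : ℚ))
    have hP : P.natDegree < N := by
      rw [natDegree_comp, descPochhammer_natDegree, natDegree_X_add_C]; omega
    have hterm : ∀ j ∈ range (d + 1),
        (-1 : ℚ) ^ j * N.choose j * (m + 1 - d + a).choose (d - j) / m.choose (d - j)
          = (-1 : ℚ) ^ j * N.choose j * P.eval (j : ℚ) / m.descFactorial (N - 1) := by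
      intro j hj
      have hjd : j ≤ d := Nat.lt_succ_iff.mp (mem_range.mp hj)
      rw [mul_div_assoc, Nat.cast_choose_div_cast_choose (by omega) (by omega),
        show m - (m + 1 - d + a) = N - 1 by omega, show m - (d - j) = j + (m - d) by omega,
        ← descPochhammer_eval_eq_descFactorial]
      simp only [P, eval_comp, eval_add, eval_X, eval_C]
      push_cast
      ring
    rw [sum_congr rfl hterm, ← sum_div,
      sum_range_alternating_choose_mul_eval_eq_zero hP (by omega), zero_div, mul_zero]

/-- The binomial identity of Lemma 2.2:
C(n-1,d) · ∑_{j=0}^d (-1)^j C(d-a,j) C(n-d+a,d-j) / C(n-1,d-j) equals C(n,d) for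
a = d and equals 0 for 0 ≤ a ≤ d-1, whenever 1 ≤ d ≤ n-1. -/
theorem binomial_identity (n d a : ℕ) (hd : 1 ≤ d) (hdn : d ≤ n - 1) (ha : a ≤ d) :
    ((n - 1).choose d : ℚ) *
      ∑ j ∈ Finset.range (d + 1),
        (-1 : ℚ) ^ j * ((d - a).choose j : ℚ) * ((n - d + a).choose (d - j) : ℚ) /
          ((n - 1).choose (d - j) : ℚ)
    = if a = d then (n.choose d : ℚ) else 0 :=
  binomial_identity_general n d a hdn ha
end

section
/- Let K be a field, 1 ≤ d ≤ n, and N ≥ n+d. Then the polynomial f = (x_1 - x_{n+1})(x_2 - x_{n+2})···(x_d - x_{n+d}) lies in the ideal of K[x_1,...,x_N] generated by the S_N-orbit of the elementary symmetric polynomial e_d(x_1,...,x_n). -/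
open MvPolynomial

/-- The elementary symmetric polynomial of degree `d` in the variables indexed by `S`. -/
noncomputable def esymmOn (K : Type*) [Field K] {N : ℕ} (S : Finset (Fin N)) (d : ℕ) :
    MvPolynomial (Fin N) K :=
  ∑ T ∈ Finset.powersetCard d S, ∏ i ∈ T, X i

/-- The ideal generated by the `S_N`-orbit of `f`. -/
noncomputable def symOrbitIdeal {K : Type*} [Field K] {N : ℕ} (f : MvPolynomial (Fin N) K) :
    Ideal (MvPolynomial (Fin N) K) :=
  Ideal.span {g | ∃ σ : Equiv.Perm (Fin N), g = rename σ f}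

section Aux

variable {K : Type*} [Field K] {N : ℕ}

lemma rename_esymmOn (σ : Equiv.Perm (Fin N)) (S : Finset (Fin N)) (d : ℕ) :
    rename (σ : Fin N → Fin N) (esymmOn K S d) = esymmOn K (S.image σ) d := by
  classical
  unfold esymmOn
  have hS : S.image (σ : Fin N → Fin N) = S.map σ.toEmbedding := by
    rw [Finset.map_eq_image]; rfl
  rw [hS, Finset.powersetCard_map, Finset.sum_map, map_sum]
  refine Finset.sum_congr rfl fun T hT => ?_
  rw [map_prod, show ((Finset.mapEmbedding σ.toEmbedding).toEmbedding T : Finset (Fin N))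
      = T.map σ.toEmbedding from rfl, Finset.prod_map]
  simp [rename_X]

lemma esymmOn_insert (a : Fin N) (W : Finset (Fin N)) (ha : a ∉ W) (m : ℕ) :
    esymmOn K (insert a W) (m + 1) = X a * esymmOn K W m + esymmOn K W (m + 1) := by
  classical
  unfold esymmOn
  have hdisj : Disjoint (Finset.powersetCard (m + 1) W)
      ((Finset.powersetCard m W).image (insert a)) := by
    rw [Finset.disjoint_right]
    rintro T hT hT'
    obtain ⟨t, ht, rfl⟩ := Finset.mem_image.1 hT
    exact ha ((Finset.mem_powersetCard.1 hT').1 (Finset.mem_insert_self a t))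
  rw [Finset.powersetCard_succ_insert ha, Finset.sum_union hdisj, Finset.sum_image, add_comm]
  · congr 1
    rw [Finset.mul_sum]
    refine Finset.sum_congr rfl fun T hT => ?_
    have haT : a ∉ T := fun h => ha ((Finset.mem_powersetCard.1 hT).1 h)
    rw [Finset.prod_insert haT]
  · intro t1 h1 t2 h2 h
    have ha1 : a ∉ t1 := fun hh => ha ((Finset.mem_powersetCard.1 h1).1 hh)
    have ha2 : a ∉ t2 := fun hh => ha ((Finset.mem_powersetCard.1 h2).1 hh)
    rw [← Finset.erase_insert ha1, h, Finset.erase_insert ha2]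

lemma esymmOn_zero (W : Finset (Fin N)) : esymmOn K W 0 = 1 := by
  simp [esymmOn]

lemma esymmOn_mem_orbit (n d : ℕ) (hn : n ≤ N) (W : Finset (Fin N)) (hW : W.card = n) :
    esymmOn K W d
      ∈ symOrbitIdeal (esymmOn K (Finset.univ.filter fun i : Fin N => (i : ℕ) < n) d) := by
  classical
  set S0 := Finset.univ.filter fun i : Fin N => (i : ℕ) < n with hS0def
  have hS0 : S0.card = n := by
    have : S0 = (Finset.range n).attachFin
        (fun m hm => lt_of_lt_of_le (Finset.mem_range.1 hm) hn) := by
      ext a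
      simp [hS0def, Finset.mem_attachFin]
    rw [this, Finset.card_attachFin, Finset.card_range]
  have hc : S0.card = W.card := by rw [hS0, hW]
  let e : {x // x ∈ S0} ≃ {x // x ∈ W} := Finset.equivOfCardEq hc
  let σ : Equiv.Perm (Fin N) := e.extendSubtype
  have himg : S0.image (σ : Fin N → Fin N) = W := by
    apply Finset.eq_of_subset_of_card_le
    · intro y hy
      obtain ⟨x, hx, rfl⟩ := Finset.mem_image.1 hy
      exact e.extendSubtype_mem x (by simpa using hx)
    · rw [Finset.card_image_of_injective _ σ.injective, hS0, hW]
  have : esymmOn K W d = rename (σ : Fin N → Fin N) (esymmOn K S0 d) := by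
    rw [rename_esymmOn, himg]
  rw [this]
  exact Ideal.subset_span ⟨σ, rfl⟩

lemma key_lemma (K : Type*) [Field K] (n d N : ℕ)
    (hd : 1 ≤ d) (hdn : d ≤ n) (hN : n + d ≤ N) :
    ∀ j, ∀ _hj : j ≤ d, ∀ W : Finset (Fin N), W.card = n - j →
      (∀ k, ∀ _hk : k < j, ((⟨k, by omega⟩ : Fin N) ∉ W ∧ (⟨n + k, by omega⟩ : Fin N) ∉ W)) →
      (∏ i ∈ Finset.univ.filter (fun i : Fin d => (i : ℕ) < j),
          (X (⟨(i : ℕ), by have := i.isLt; omega⟩ : Fin N)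
            - X (⟨n + (i : ℕ), by have := i.isLt; omega⟩ : Fin N)))
        * esymmOn K W (d - j)
        ∈ symOrbitIdeal (esymmOn K (Finset.univ.filter fun i : Fin N => (i : ℕ) < n) d) := by
  intro j
  induction j with
  | zero =>
    intro _ W hW _
    have hfil : Finset.univ.filter (fun i : Fin d => (i : ℕ) < 0) = ∅ := by
      ext i; simp
    rw [hfil, Finset.prod_empty, one_mul]
    exact esymmOn_mem_orbit n d (by omega) W (by omega)
  | succ j ih =>
    intro hj1 W hW hdisj
    have hjd : j < d := hj1
    have hjN : j < N := by omega
    have hnjN : n + j < N := by omega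
    set u : Fin N := ⟨j, hjN⟩ with hu_def
    set v : Fin N := ⟨n + j, hnjN⟩ with hv_def
    have hu : u ∉ W := (hdisj j (Nat.lt_succ_self j)).1
    have hv : v ∉ W := (hdisj j (Nat.lt_succ_self j)).2
    have hmdj : (d - (j + 1)) + 1 = d - j := by omega
    have hrec : (X u - X v) * esymmOn K W (d - (j + 1))
        = esymmOn K (insert u W) (d - j) - esymmOn K (insert v W) (d - j) := by
      rw [← hmdj, esymmOn_insert u W hu, esymmOn_insert v W hv]; ring
    have hjd' : (⟨j, hjd⟩ : Fin d) ∉ Finset.univ.filter (fun i : Fin d => (i : ℕ) < j) := by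
      simp
    have hfil : Finset.univ.filter (fun i : Fin d => (i : ℕ) < j + 1)
        = insert (⟨j, hjd⟩ : Fin d) (Finset.univ.filter (fun i : Fin d => (i : ℕ) < j)) := by
      ext i
      simp only [Finset.mem_filter, Finset.mem_univ, true_and, Finset.mem_insert, Fin.ext_iff]
      omega
    rw [hfil, Finset.prod_insert hjd']
    set P : MvPolynomial (Fin N) K :=
      ∏ i ∈ Finset.univ.filter (fun i : Fin d => (i : ℕ) < j),
        (X (⟨(i : ℕ), by have := i.isLt; omega⟩ : Fin N)
          - X (⟨n + (i : ℕ), by have := i.isLt; omega⟩ : Fin N)) with hP_def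
    show (X u - X v) * P * esymmOn K W (d - (j + 1)) ∈ _
    have hre : (X u - X v) * P * esymmOn K W (d - (j + 1))
        = P * esymmOn K (insert u W) (d - j) - P * esymmOn K (insert v W) (d - j) := by
      rw [mul_comm (X u - X v) P, mul_assoc, hrec]; ring
    rw [hre]
    have hcard_u : (insert u W).card = n - j := by
      rw [Finset.card_insert_of_notMem hu, hW]; omega
    have hcard_v : (insert v W).card = n - j := by
      rw [Finset.card_insert_of_notMem hv, hW]; omega
    have hdisj_u : ∀ k, ∀ _hk : k < j, ((⟨k, by omega⟩ : Fin N) ∉ insert u W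
        ∧ (⟨n + k, by omega⟩ : Fin N) ∉ insert u W) := by
      intro k hk
      have h := hdisj k (by omega)
      constructor <;> rw [Finset.mem_insert] <;> push_neg <;>
        exact ⟨by simp [hu_def, Fin.ext_iff]; omega, by tauto⟩
    have hdisj_v : ∀ k, ∀ _hk : k < j, ((⟨k, by omega⟩ : Fin N) ∉ insert v W
        ∧ (⟨n + k, by omega⟩ : Fin N) ∉ insert v W) := by
      intro k hk
      have h := hdisj k (by omega)
      constructor <;> rw [Finset.mem_insert] <;> push_neg <;>
        exact ⟨by simp [hv_def, Fin.ext_iff]; omega, by tauto⟩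
    exact sub_mem (ih (by omega) (insert u W) hcard_u hdisj_u)
      (ih (by omega) (insert v W) hcard_v hdisj_v)

end Aux

/-- `(x_1 - x_{n+1})(x_2 - x_{n+2}) ⋯ (x_d - x_{n+d})` lies in the ideal generated by the
`S_N`-orbit of `e_d(x_1, …, x_n)` when `N ≥ n + d` (variables are 0-indexed). -/
theorem product_in_orbit_ideal (K : Type*) [Field K] (n d N : ℕ)
    (hd : 1 ≤ d) (hdn : d ≤ n) (hN : n + d ≤ N) :
    (∏ i : Fin d,
        (X (⟨(i : ℕ), by have := i.isLt; omega⟩ : Fin N)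
          - X (⟨n + (i : ℕ), by have := i.isLt; omega⟩ : Fin N)))
      ∈ symOrbitIdeal (esymmOn K (Finset.univ.filter (fun i : Fin N => (i : ℕ) < n)) d) := by
  classical
  have hWcard : (Finset.univ.filter fun i : Fin N => d ≤ (i : ℕ) ∧ (i : ℕ) < n).card = n - d := by
    have : (Finset.univ.filter fun i : Fin N => d ≤ (i : ℕ) ∧ (i : ℕ) < n)
        = (Finset.Ico d n).attachFin (fun m hm => by
            have := (Finset.mem_Ico.1 hm).2; omega) := by
      ext a
      simp [Finset.mem_attachFin, Finset.mem_Ico]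
    rw [this, Finset.card_attachFin, Nat.card_Ico]
  have hWdisj : ∀ k, ∀ _hk : k < d,
      ((⟨k, by omega⟩ : Fin N) ∉ Finset.univ.filter (fun i : Fin N => d ≤ (i : ℕ) ∧ (i : ℕ) < n)
        ∧ (⟨n + k, by omega⟩ : Fin N)
          ∉ Finset.univ.filter (fun i : Fin N => d ≤ (i : ℕ) ∧ (i : ℕ) < n)) := by
    intro k hk
    constructor <;> simp <;> omega
  have h := key_lemma K n d N hd hdn hN d le_rfl
    (Finset.univ.filter fun i : Fin N => d ≤ (i : ℕ) ∧ (i : ℕ) < n) hWcard hWdisj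
  rw [Nat.sub_self, esymmOn_zero, mul_one] at h
  have hfil : Finset.univ.filter (fun i : Fin d => (i : ℕ) < d) = Finset.univ := by
    ext i; simp [i.isLt]
  rw [hfil] at h
  exact h
end

section
/- Let K be a field with char(K) not dividing C(n,d), 1 ≤ d ≤ n, N ≥ n+d, and I ⊆ K[x_1,...,x_N] the ideal generated by the S_N-orbit of e_d(x_1,...,x_n). Then the vanishing set of I in K^N equals the set of points with at most d-1 nonzero coordinates, i.e. V(I) = V(S_N.x_1···x_d). -/
open MvPolynomial

/-!
Write `e_k(A)` for `e_k` evaluated at the coordinates `y i`, `i ∈ A`; the `S_N`-orbit of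
`e_d(x_1, …, x_n)` vanishes at `y` exactly when `e_d(A) = 0` for every `n`-set `A`. If `y` has
`d` nonzero coordinates, then either some value `t ≠ 0` occupies `n` coordinates, and on those
`e_d = C(n,d) t^d ≠ 0`, or every value `t` is missed by at least `d` coordinates. In the second
case the identity `e_{k+1}(A ∪ {a}) - e_{k+1}(A ∪ {b}) = (y a - y b) e_k(A)` descends from `e_d`
on `n`-sets to `e_0 = 1` on an `(n - d)`-set `B`, provided each step finds two coordinates outside
`B` with distinct values; since `N ≥ n + d`, `B` can be chosen so that for every `t` at least `d`
coordinates outside `B` differ from `t`, and this property survives the descent.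
-/

open Finset

namespace Multiset

variable {R : Type*} [CommSemiring R]

theorem esymm_cons_succ (a : R) (s : Multiset R) (k : ℕ) :
    (a ::ₘ s).esymm (k + 1) = s.esymm (k + 1) + a * s.esymm k := by
  simp [esymm, powersetCard_cons, sum_map_mul_left]

theorem esymm_eq_of_forall_eq {s : Multiset R} {t : R} (h : ∀ b ∈ s, b = t) (k : ℕ) :
    s.esymm k = s.card.choose k * t ^ k := by
  have hprod : ∀ u ∈ s.powersetCard k, u.prod = t ^ k := by
    intro u hu
    obtain ⟨hus, huk⟩ := mem_powersetCard.1 hu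
    rw [eq_replicate.2 ⟨huk, fun b hb => h b (mem_of_le hus hb)⟩, prod_replicate]
  rw [esymm, map_congr rfl hprod, map_const', sum_replicate, card_powersetCard, nsmul_eq_mul]

end Multiset

theorem Finset.card_filter_compl_le_card_filter_compl_insert {ι : Type*} [Fintype ι]
    [DecidableEq ι] (p : ι → Prop) [DecidablePred p] (a : ι) (B : Finset ι) :
    #{i ∈ Bᶜ | p i} ≤ #{i ∈ (insert a B)ᶜ | p i} + 1 := by
  rw [compl_insert, filter_erase]
  exact Nat.le_add_of_sub_le pred_card_le_card_erase

section LevelSets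

variable {ι R : Type*} [Fintype ι] [DecidableEq ι] [DecidableEq R] (y : ι → R)

theorem exists_card_eq_two_mul_forall_le_card_filter_ne {d : ℕ}
    (hy : ∀ t, d ≤ #{i | y i ≠ t}) (hd : 2 * d ≤ Fintype.card ι) :
    ∃ D : Finset ι, #D = 2 * d ∧ ∀ t, d ≤ #{i ∈ D | y i ≠ t} := by
  by_cases hfiber : ∃ t₀, d ≤ #{i | y i = t₀}
  · obtain ⟨t₀, ht₀⟩ := hfiber
    obtain ⟨R₀, hR₀, hR₀card⟩ := exists_subset_card_eq (hy t₀)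
    obtain ⟨W₀, hW₀, hW₀card⟩ := exists_subset_card_eq ht₀
    have hdisj : Disjoint R₀ W₀ :=
      (disjoint_filter_filter_not univ univ (y · = t₀)).symm.mono hR₀ hW₀
    refine ⟨R₀ ∪ W₀, by rw [card_union_of_disjoint hdisj]; omega, fun t => ?_⟩
    obtain rfl | ht := eq_or_ne t t₀
    · calc d = #R₀ := hR₀card.symm
        _ ≤ _ := card_le_card fun i hi =>
          mem_filter.2 ⟨mem_union_left _ hi, (mem_filter.1 (hR₀ hi)).2⟩
    · calc d = #W₀ := hW₀card.symm
        _ ≤ _ := card_le_card fun i hi =>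
          mem_filter.2 ⟨mem_union_right _ hi, (mem_filter.1 (hW₀ hi)).2 ▸ ht.symm⟩
  · push Not at hfiber
    obtain ⟨D, -, hD⟩ := exists_subset_card_eq (s := (univ : Finset ι)) (n := 2 * d)
      (by rwa [card_univ])
    refine ⟨D, hD, fun t => ?_⟩
    have hsplit := card_filter_add_card_filter_not (s := D) (p := (y · ≠ t))
    have hfiber_t : #{i ∈ D | ¬y i ≠ t} ≤ #{i | y i = t} :=
      card_le_card fun i hi => by
        simp only [not_not, mem_filter, mem_univ, true_and] at hi ⊢
        exact hi.2
    have := hfiber t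
    omega

theorem exists_card_eq_forall_le_card_filter_compl_ne {d m : ℕ}
    (hy : ∀ t, d ≤ #{i | y i ≠ t}) (hcard : m + 2 * d ≤ Fintype.card ι) :
    ∃ B : Finset ι, #B = m ∧ ∀ t, d ≤ #{i ∈ Bᶜ | y i ≠ t} := by
  obtain ⟨D, hD, hDy⟩ := exists_card_eq_two_mul_forall_le_card_filter_ne y hy (by omega)
  obtain ⟨B, hBD, hB⟩ := exists_subset_card_eq (s := Dᶜ) (n := m)
    (by rw [card_compl, hD]; omega)
  refine ⟨B, hB, fun t => (hDy t).trans (card_le_card (filter_subset_filter _ ?_))⟩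
  rwa [← compl_subset_compl, compl_compl] at hBD

end LevelSets

section CommSemiring

variable {ι R : Type*} [CommSemiring R] (y : ι → R)

theorem esymm_map_val_of_forall_eq {A : Finset ι} {t : R} (h : ∀ i ∈ A, y i = t) (k : ℕ) :
    (A.val.map y).esymm k = (#A).choose k * t ^ k := by
  rw [Multiset.esymm_eq_of_forall_eq (by simpa using h), Multiset.card_map, card_val]

theorem esymm_map_val_insert [DecidableEq ι] {a : ι} {A : Finset ι} (ha : a ∉ A) (k : ℕ) :
    ((insert a A).val.map y).esymm (k + 1) =
      (A.val.map y).esymm (k + 1) + y a * (A.val.map y).esymm k := by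
  rw [insert_val_of_notMem ha, Multiset.map_cons, Multiset.esymm_cons_succ]

variable [Fintype ι] [DecidableEq R]

theorem esymm_map_val_eq_zero_of_card_filter_ne_zero_lt {k : ℕ} (hy : #{i | y i ≠ 0} < k)
    (A : Finset ι) : (A.val.map y).esymm k = 0 := by
  rw [esymm_map_val]
  refine sum_eq_zero fun T hT => ?_
  obtain ⟨i, hiT, hi⟩ : ∃ i ∈ T, y i = 0 := by
    by_contra! hT0
    have := card_le_card (show T ⊆ ({i | y i ≠ 0} : Finset ι) by
      intro i hi; simpa using hT0 i hi)
    rw [(mem_powersetCard.1 hT).2] at this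
    omega
  exact prod_eq_zero hiT hi

theorem exists_card_eq_esymm_map_val_ne_zero_of_le_card_fiber {m k : ℕ} {t : R}
    (ht : (m.choose k : R) * t ^ k ≠ 0) (hm : m ≤ #{i | y i = t}) :
    ∃ A : Finset ι, #A = m ∧ (A.val.map y).esymm k ≠ 0 := by
  obtain ⟨A, hAt, hA⟩ := exists_subset_card_eq hm
  refine ⟨A, hA, ?_⟩
  rwa [esymm_map_val_of_forall_eq y (fun i hi => (mem_filter.1 (hAt hi)).2), hA]

end CommSemiring

section CommRing

variable {ι R : Type*} [CommRing R] (y : ι → R)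

theorem esymm_map_val_eq_zero_of_insert [DecidableEq ι] [NoZeroDivisors R] {a b : ι}
    {A : Finset ι} (ha : a ∉ A) (hb : b ∉ A) (hab : y a ≠ y b) {k : ℕ}
    (hA : ((insert a A).val.map y).esymm (k + 1) = 0)
    (hB : ((insert b A).val.map y).esymm (k + 1) = 0) :
    (A.val.map y).esymm k = 0 := by
  rw [esymm_map_val_insert y ha] at hA
  rw [esymm_map_val_insert y hb] at hB
  have : (y a - y b) * (A.val.map y).esymm k = 0 := by linear_combination hA - hB
  exact (mul_eq_zero.1 this).resolve_left (sub_ne_zero.2 hab)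

variable [Fintype ι] [DecidableEq R]

theorem esymm_map_val_eq_zero_of_forall_le_card_filter_ne [DecidableEq ι] [NoZeroDivisors R]
    {j l : ℕ} {B : Finset ι} (hB : ∀ t, j ≤ #{i ∈ Bᶜ | y i ≠ t})
    (h : ∀ A : Finset ι, #A = #B + j → (A.val.map y).esymm (l + j) = 0) :
    (B.val.map y).esymm l = 0 := by
  induction j generalizing B l with
  | zero => simpa using h B rfl
  | succ j ih =>
    obtain ⟨a, ha⟩ : {i ∈ Bᶜ | y i ≠ 0}.Nonempty := card_pos.1 (by have := hB 0; omega)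
    obtain ⟨b, hb⟩ : {i ∈ Bᶜ | y i ≠ y a}.Nonempty :=
      card_pos.1 (by have := hB (y a); omega)
    simp only [mem_filter, mem_compl] at ha hb
    have hinsert : ∀ c ∉ B, ((insert c B).val.map y).esymm (l + 1) = 0 := fun c hc =>
      ih (fun t => by
          have := card_filter_compl_le_card_filter_compl_insert (y · ≠ t) c B
          have := hB t
          omega)
        (fun A hA => by
          rw [card_insert_of_notMem hc] at hA
          simpa [add_assoc, add_comm 1 j] using h A (by omega))
    exact esymm_map_val_eq_zero_of_insert y ha.1 hb.1 (Ne.symm hb.2) (hinsert a ha.1)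
      (hinsert b hb.1)

theorem exists_card_eq_esymm_map_val_ne_zero [DecidableEq ι] [NoZeroDivisors R]
    [Nontrivial R] {m k : ℕ} (hy : ∀ t, k ≤ #{i | y i ≠ t})
    (hcard : m + k ≤ Fintype.card ι) (hkm : k ≤ m) :
    ∃ A : Finset ι, #A = m ∧ (A.val.map y).esymm k ≠ 0 := by
  obtain ⟨B, hB, hBy⟩ := exists_card_eq_forall_le_card_filter_compl_ne y (m := m - k) hy
    (by omega)
  by_contra! h
  have := esymm_map_val_eq_zero_of_forall_le_card_filter_ne y (l := 0) hBy
    (fun A hA => by simpa using h A (by omega))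
  simp [Multiset.esymm] at this

end CommRing

theorem eval_rename_esymmOn {K : Type*} [Field K] {N : ℕ} (y : Fin N → K)
    (σ : Equiv.Perm (Fin N)) (S : Finset (Fin N)) (d : ℕ) :
    eval y (rename σ (esymmOn K S d)) = ((S.map σ.toEmbedding).val.map y).esymm d := by
  simp [esymmOn, esymm_map_val]

theorem forall_perm_eval_rename_esymmOn_eq_zero_iff {K : Type*} [Field K] {N : ℕ}
    (y : Fin N → K) (S : Finset (Fin N)) (d : ℕ) :
    (∀ σ : Equiv.Perm (Fin N), eval y (rename σ (esymmOn K S d)) = 0) ↔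
      ∀ A : Finset (Fin N), #A = #S → (A.val.map y).esymm d = 0 := by
  simp only [eval_rename_esymmOn]
  refine ⟨fun h A hA => ?_, fun h σ => h _ (card_map _)⟩
  obtain ⟨σ, rfl⟩ := Equiv.Perm.exists_map_finset_eq S A hA.symm
  exact h σ

open scoped Classical in
theorem vanishing_set_eq (K : Type*) [Field K] (n d N : ℕ)
    (hd : 1 ≤ d) (hdn : d ≤ n) (hN : n + d ≤ N)
    (hchar : ((n.choose d : ℕ) : K) ≠ 0) (y : Fin N → K) :
    (∀ σ : Equiv.Perm (Fin N),
        eval y (rename σ (esymmOn K (Finset.univ.filter (fun i : Fin N => (i : ℕ) < n)) d)) = 0)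
      ↔ (Finset.univ.filter (fun i : Fin N => y i ≠ 0)).card ≤ d - 1 := by
  rw [forall_perm_eval_rename_esymmOn_eq_zero_iff, Fin.card_filter_val_lt,
    min_eq_right (by omega)]
  refine ⟨fun h => ?_, fun h A _ =>
    esymm_map_val_eq_zero_of_card_filter_ne_zero_lt y (by omega) A⟩
  by_contra! hsupp
  obtain ⟨A, hA, hne⟩ : ∃ A : Finset (Fin N), #A = n ∧ (A.val.map y).esymm d ≠ 0 := by
    by_cases hfiber : ∃ t ≠ 0, n ≤ #{i | y i = t}
    · obtain ⟨t, ht, hnt⟩ := hfiber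
      exact exists_card_eq_esymm_map_val_ne_zero_of_le_card_fiber y
        (mul_ne_zero hchar (pow_ne_zero d ht)) hnt
    · push Not at hfiber
      refine exists_card_eq_esymm_map_val_ne_zero y (fun t => ?_) (by simpa using hN) hdn
      obtain rfl | ht := eq_or_ne t 0
      · omega
      · have := card_filter_add_card_filter_not (s := univ) (p := (y · ≠ t))
        simp only [card_univ, Fintype.card_fin, not_not] at this
        have := hfiber t ht
        omega
  exact hne (h A hA)
end

section
/- Let K be a field with char(K) = 0 or char(K) > n, and let f ∈ K[x_1,...,x_n] be homogeneous of degree d with only square-free terms. If f(1,1,...,1) ≠ 0, then for all N ≥ n+d, in K[x_1,...,x_N] the ideal generated by the S_N-orbit of f equals the ideal generated by the S_N-orbit of x_1 x_2 ··· x_d. -/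
open MvPolynomial

/-!
Induct on `d` for an arbitrary subspace `W` of polynomials that is stable under the
permutations of a finite set `U` of variables. Let `f = ∑ c_S x_S ∈ W` with `∑ c_S ≠ 0`, all
`S ⊆ V ⊆ U` of size `d + 1`, where `|V| + d + 1 ≤ |U|`. Since
`∑_i ∑_{S ∋ i} c_S = (d + 1) ∑ c_S`, some `i` has `∑_{S ∋ i} c_S ≠ 0`; pick `j ∈ U \ V`. Then
`f - (i j)·f = (x_i - x_j)·g` with `g = ∑_{S ∋ i} c_S x_{S \ i}`, so the induction hypothesis
for `g`, applied to `{p | (x_i - x_j) p ∈ W}` and the variables `U \ {i, j}`, puts every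
`(x_i - x_j) x_S` into `W`, hence every `x_{S ∪ a} - x_{S ∪ b}`. So all `x_T` with
`|T| = d + 1` are congruent modulo `W`, and `f ≡ (∑ c_S) x_T` gives `x_T ∈ W`. The theorem is
the case where `W` is the orbit ideal of `f` and `U` is the set of all `N` variables;
conversely each term of `f` is a permuted `x_1 ⋯ x_d`.
-/

open Finset Equiv
open scoped Nat

section Combinatorics

variable {α : Type*} [DecidableEq α]

theorem sub_mem_of_insert_sub_insert_mem {M : Type*} [AddCommGroup M] (W : AddSubgroup M)
    (m : Finset α → M) {U : Finset α} {k : ℕ}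
    (h : ∀ S ⊆ U, #S = k → ∀ a ∈ U, ∀ b ∈ U, a ∉ S → b ∉ S → a ≠ b →
      m (insert a S) - m (insert b S) ∈ W)
    {T T' : Finset α} (hT : T ⊆ U) (hT' : T' ⊆ U) (hTk : #T = k + 1) (hT'k : #T' = k + 1) :
    m T - m T' ∈ W := by
  induction hn : #(T \ T') generalizing T with
  | zero =>
    have hsub : T ⊆ T' := sdiff_eq_empty_iff_subset.1 (card_eq_zero.1 hn)
    rw [eq_of_subset_of_card_le hsub (by omega), sub_self]
    exact W.zero_mem
  | succ n ih =>
    obtain ⟨a, ha⟩ : (T \ T').Nonempty := card_pos.1 (by omega)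
    obtain ⟨b, hb⟩ : (T' \ T).Nonempty :=
      card_pos.1 (by rw [← card_sdiff_comm (by omega)]; omega)
    have haT := (mem_sdiff.1 ha).1
    have hbT' := (mem_sdiff.1 hb).1
    have hbT := (mem_sdiff.1 hb).2
    have hS : T.erase a ⊆ U := (erase_subset a T).trans hT
    have hexch := h (T.erase a) hS (by rw [card_erase_of_mem haT]; omega) a (hT haT) b (hT' hbT')
      (notMem_erase a T) (fun hb' => hbT (mem_of_mem_erase hb')) (by rintro rfl; exact hbT haT)
    rw [insert_erase haT] at hexch
    have hrest := ih (T := insert b (T.erase a)) (insert_subset (hT' hbT') hS)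
      (by rw [card_insert_of_notMem (fun hb' => hbT (mem_of_mem_erase hb')), card_erase_of_mem haT]
          omega)
      (by rw [insert_sdiff_of_mem _ hbT', erase_sdiff_comm, card_erase_of_mem ha]; omega)
    simpa using W.add_mem hexch hrest

theorem exists_perm_apply_eq_apply_eq {U : Finset α} {i j a b : α} (hi : i ∈ U) (hj : j ∈ U)
    (ha : a ∈ U) (hb : b ∈ U) (hij : i ≠ j) (hab : a ≠ b) :
    ∃ σ : Perm α, σ i = a ∧ σ j = b ∧ ∀ x ∉ U, σ x = x := by
  have hja : swap i a j ≠ a := by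
    rw [Ne, swap_apply_eq_iff, swap_apply_right]; exact hij.symm
  have hjU : swap i a j ∈ U := by
    rw [swap_apply_def]; split_ifs <;> assumption
  refine ⟨swap (swap i a j) b * swap i a, ?_, by simp, fun x hx => ?_⟩
  · simp [swap_apply_of_ne_of_ne hja.symm hab]
  · have hne : ∀ y ∈ U, x ≠ y := fun y hy h => hx (h ▸ hy)
    simp [swap_apply_of_ne_of_ne (hne i hi) (hne a ha),
      swap_apply_of_ne_of_ne (hne _ hjU) (hne b hb)]

theorem sum_sum_filter_mem_eq_sum_card_nsmul {ι M : Type*} [AddCommMonoid M] (t : Finset ι)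
    (s : ι → Finset α) (c : ι → M) {V : Finset α} (hs : ∀ k ∈ t, s k ⊆ V) :
    ∑ x ∈ V, ∑ k ∈ t with x ∈ s k, c k = ∑ k ∈ t, #(s k) • c k := by
  simp_rw [sum_filter]
  rw [sum_comm]
  refine sum_congr rfl fun k hk => ?_
  rw [← sum_filter, sum_const, filter_mem_eq_inter, inter_eq_right.2 (hs k hk)]

end Combinatorics

theorem Submodule.mem_of_sum_smul_mem {K M ι : Type*} [DivisionRing K] [AddCommGroup M]
    [Module K M] (W : Submodule K M) {t : Finset ι} {c : ι → K} {m : ι → M} {m₀ : M}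
    (h : ∀ k ∈ t, m k - m₀ ∈ W) (hc : ∑ k ∈ t, c k ≠ 0)
    (hmem : ∑ k ∈ t, c k • m k ∈ W) :
    m₀ ∈ W := by
  have hsum :
      (∑ k ∈ t, c k) • m₀ = ∑ k ∈ t, c k • m k - ∑ k ∈ t, c k • (m k - m₀) := by
    simp [smul_sub, sum_smul]
  rw [← W.smul_mem_iff hc, hsum]
  exact W.sub_mem hmem (W.sum_mem fun k hk => W.smul_mem _ (h k hk))

section Invariance

variable {α K : Type*} [DecidableEq α] [Field K]

def RenameInvariantOn (U : Finset α) (W : Submodule K (MvPolynomial α K)) : Prop :=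
  ∀ σ : Perm α, (∀ x ∉ U, σ x = x) → ∀ p ∈ W, rename σ p ∈ W

theorem prod_X_sub_rename_swap {S : Finset α} (i : α) {j : α} (hj : j ∉ S) :
    ∏ x ∈ S, (X x : MvPolynomial α K) - rename (swap i j) (∏ x ∈ S, X x)
      = if i ∈ S then (X i - X j) * ∏ x ∈ S.erase i, X x else 0 := by
  simp only [map_prod, rename_X]
  split_ifs with hi
  · have hfix : ∀ x ∈ S.erase i, (X (swap i j x) : MvPolynomial α K) = X x := fun x hx => by
      rw [swap_apply_of_ne_of_ne (ne_of_mem_erase hx)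
        (by rintro rfl; exact hj (mem_of_mem_erase hx))]
    rw [← mul_prod_erase S _ hi, ← mul_prod_erase S (fun x => X (swap i j x)) hi,
      swap_apply_left, prod_congr rfl hfix]
    ring
  · have hfix : ∀ x ∈ S, (X (swap i j x) : MvPolynomial α K) = X x := fun x hx => by
      rw [swap_apply_of_ne_of_ne (by rintro rfl; exact hi hx) (by rintro rfl; exact hj hx)]
    rw [prod_congr rfl hfix, sub_self]

theorem sum_smul_prod_X_sub_rename_swap {ι : Type*} (t : Finset ι) (s : ι → Finset α)
    (c : ι → K) (i : α) {j : α} (hj : ∀ k ∈ t, j ∉ s k) :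
    ∑ k ∈ t, c k • ∏ x ∈ s k, X x - rename (swap i j) (∑ k ∈ t, c k • ∏ x ∈ s k, X x)
      = (X i - X j) *
        ∑ k ∈ t with i ∈ s k, c k • ∏ x ∈ (s k).erase i, (X x : MvPolynomial α K) := by
  rw [map_sum, ← sum_sub_distrib, sum_filter, mul_sum]
  refine sum_congr rfl fun k hk => ?_
  rw [map_smul, ← smul_sub, prod_X_sub_rename_swap i (hj k hk)]
  split_ifs <;> simp

namespace RenameInvariantOn

variable {U : Finset α} {W : Submodule K (MvPolynomial α K)}

theorem comap_mulLeft (hW : RenameInvariantOn U W) (i j : α) :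
    RenameInvariantOn ((U.erase i).erase j) (W.comap (LinearMap.mulLeft K (X i - X j))) := by
  intro σ hσ p hp
  have hi : σ i = i := hσ i (by simp)
  have hj : σ j = j := hσ j (by simp)
  have hU : ∀ x ∉ U, σ x = x := fun x hx =>
    hσ x fun h => hx (mem_of_mem_erase (mem_of_mem_erase h))
  simp only [Submodule.mem_comap, LinearMap.mulLeft_apply] at hp ⊢
  simpa [hi, hj] using hW σ hU _ hp

theorem insert_sub_insert_mem (hW : RenameInvariantOn U W) {i j : α} (hi : i ∈ U) (hj : j ∈ U)
    (hij : i ≠ j) {d : ℕ}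
    (h : ∀ S ⊆ (U.erase i).erase j, #S = d → (X i - X j) * ∏ x ∈ S, X x ∈ W)
    {S : Finset α} (hS : S ⊆ U) (hSd : #S = d) {a b : α} (ha : a ∈ U) (hb : b ∈ U)
    (haS : a ∉ S) (hbS : b ∉ S) (hab : a ≠ b) :
    ∏ x ∈ insert a S, X x - ∏ x ∈ insert b S, X x ∈ W := by
  obtain ⟨σ, hσi, hσj, hσU⟩ := exists_perm_apply_eq_apply_eq hi hj ha hb hij hab
  have hS₀ : S.map σ.symm.toEmbedding ⊆ (U.erase i).erase j := by
    intro y hy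
    obtain ⟨z, hz, rfl⟩ := mem_map.1 hy
    have hzU : σ.symm z ∈ U := by
      by_contra hz'
      have := hσU _ hz'
      rw [apply_symm_apply] at this
      exact hz' (this ▸ hS hz)
    simp only [toEmbedding_apply, mem_erase, ne_eq, symm_apply_eq]
    exact ⟨fun h => hbS (hσj ▸ h ▸ hz), fun h => haS (hσi ▸ h ▸ hz), hzU⟩
  have := hW σ hσU _ (h _ hS₀ (by simp [hSd]))
  rw [prod_insert haS, prod_insert hbS, ← sub_mul]
  simpa [prod_map, hσi, hσj] using this

theorem prod_X_mem {ι : Type*} (hW : RenameInvariantOn U W) {V : Finset α} (hVU : V ⊆ U)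
    {d : ℕ} (hd : #V + d ≤ #U) (hK : (d ! : K) ≠ 0) {t : Finset ι} {s : ι → Finset α}
    {c : ι → K} (hs : ∀ k ∈ t, s k ⊆ V ∧ #(s k) = d) (hc : ∑ k ∈ t, c k ≠ 0)
    (hmem : ∑ k ∈ t, c k • ∏ x ∈ s k, X x ∈ W) {T : Finset α} (hTU : T ⊆ U) (hT : #T = d) :
    ∏ x ∈ T, X x ∈ W := by
  induction d generalizing U V W t s c T with
  | zero =>
    refine W.mem_of_sum_smul_mem (fun k hk => ?_) hc hmem
    rw [card_eq_zero.1 hT, card_eq_zero.1 (hs k hk).2, sub_self]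
    exact W.zero_mem
  | succ d ih =>
    have hK' : ((d + 1 : ℕ) : K) ≠ 0 ∧ (d ! : K) ≠ 0 := by
      simpa [Nat.factorial_succ] using hK
    obtain ⟨i, hiV, hi⟩ : ∃ i ∈ V, ∑ k ∈ t with i ∈ s k, c k ≠ 0 := by
      refine exists_ne_zero_of_sum_ne_zero ?_
      rw [sum_sum_filter_mem_eq_sum_card_nsmul t s c fun k hk => (hs k hk).1,
        sum_congr rfl fun k hk => by rw [(hs k hk).2], ← smul_sum, nsmul_eq_mul]
      exact mul_ne_zero hK'.1 hc
    obtain ⟨j, hjU, hjV⟩ : ∃ j ∈ U, j ∉ V :=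
      not_subset.1 fun hUV => by have := card_le_card hUV; omega
    have hij : i ≠ j := by rintro rfl; exact hjV hiV
    have hswap : ∀ x ∉ U, swap i j x = x := fun x hx =>
      swap_apply_of_ne_of_ne (by rintro rfl; exact hx (hVU hiV)) (by rintro rfl; exact hx hjU)
    have hmul : ∀ S ⊆ (U.erase i).erase j, #S = d → (X i - X j) * ∏ x ∈ S, X x ∈ W := by
      intro S hS hSd
      refine ih (hW.comap_mulLeft i j) (V := V.erase i) (fun x hx => ?_) ?_ hK'.2
        (t := {k ∈ t | i ∈ s k}) (s := fun k => (s k).erase i) (c := c) (fun k hk => ?_) hi ?_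
        hS hSd
      · exact mem_erase.2 ⟨by rintro rfl; exact hjV (mem_of_mem_erase hx),
          erase_subset_erase i hVU hx⟩
      · have := card_pos.2 ⟨i, hiV⟩
        rw [card_erase_of_mem hiV, card_erase_of_mem (mem_erase.2 ⟨hij.symm, hjU⟩),
          card_erase_of_mem (hVU hiV)]
        omega
      · obtain ⟨hk, hik⟩ := mem_filter.1 hk
        refine ⟨erase_subset_erase i (hs k hk).1, ?_⟩
        rw [card_erase_of_mem hik, (hs k hk).2]
        rfl
      · rw [Submodule.mem_comap, LinearMap.mulLeft_apply,
          ← sum_smul_prod_X_sub_rename_swap t s c i fun k hk h => hjV ((hs k hk).1 h)]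
        exact W.sub_mem hmem (hW _ hswap _ hmem)
    refine W.mem_of_sum_smul_mem (fun k hk => ?_) hc hmem
    exact sub_mem_of_insert_sub_insert_mem W.toAddSubgroup (fun S => ∏ x ∈ S, X x)
      (fun S hS hSd a ha b hb haS hbS hab =>
        hW.insert_sub_insert_mem (hVU hiV) hjU hij hmul hS hSd ha hb haS hbS hab)
      ((hs k hk).1.trans hVU) hTU (hs k hk).2 hT

end RenameInvariantOn

end Invariance

theorem natCast_factorial_ne_zero {K : Type*} [Field K] {n : ℕ}
    (hchar : ringChar K = 0 ∨ n < ringChar K) : (n ! : K) ≠ 0 := by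
  have := ringChar.charP K
  rcases hchar with h0 | hlt
  · have : CharP K 0 := h0 ▸ this
    have := CharP.charP_to_charZero K
    exact Nat.cast_ne_zero.2 (Nat.factorial_ne_zero n)
  · have hp : (ringChar K).Prime := (CharP.char_is_prime_or_zero K _).resolve_right (by omega)
    rw [Ne, CharP.cast_eq_zero_iff K (ringChar K), hp.dvd_factorial]
    omega

section Squarefree

variable {σ R : Type*} [CommSemiring R]

theorem eq_sum_smul_prod_X_of_le_one {f : MvPolynomial σ R}
    (hsq : ∀ v ∈ f.support, ∀ i, v i ≤ 1) :
    f = ∑ v ∈ f.support, coeff v f • ∏ i ∈ v.support, X i := by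
  conv_lhs => rw [f.as_sum]
  refine sum_congr rfl fun v hv => ?_
  rw [monomial_eq, Finsupp.prod, smul_eq_C_mul]
  congr 1
  refine prod_congr rfl fun i hi => ?_
  rw [le_antisymm (hsq v hv i) (Nat.one_le_iff_ne_zero.2 (Finsupp.mem_support_iff.1 hi)), pow_one]

theorem card_support_of_isHomogeneous {f : MvPolynomial σ R} {d : ℕ} (hf : f.IsHomogeneous d)
    (hsq : ∀ v ∈ f.support, ∀ i, v i ≤ 1) {v : σ →₀ ℕ} (hv : v ∈ f.support) :
    #v.support = d := by
  have hdeg : v.degree = d := by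
    rw [Finsupp.degree_eq_weight_one]; exact hf (mem_support_iff.1 hv)
  rw [← hdeg, Finsupp.degree_apply, card_eq_sum_ones]
  exact sum_congr rfl fun i hi =>
    (le_antisymm (hsq v hv i) (Nat.one_le_iff_ne_zero.2 (Finsupp.mem_support_iff.1 hi))).symm

theorem eval_one_eq_sum_coeff (f : MvPolynomial σ R) :
    eval (fun _ => 1) f = ∑ v ∈ f.support, coeff v f := by
  simp [eval_eq]

end Squarefree

section Orbit

variable {K : Type*} [Field K] {N : ℕ}

theorem rename_mem_symOrbitIdeal {f p : MvPolynomial (Fin N) K} (σ : Perm (Fin N))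
    (hp : p ∈ symOrbitIdeal f) : rename σ p ∈ symOrbitIdeal f := by
  have hle : symOrbitIdeal f ≤ (symOrbitIdeal f).comap (rename σ) := by
    refine Ideal.span_le.2 ?_
    rintro _ ⟨τ, rfl⟩
    exact Ideal.subset_span ⟨τ.trans σ, by rw [rename_rename]; rfl⟩
  exact hle hp

theorem mem_symOrbitIdeal_self (f : MvPolynomial (Fin N) K) : f ∈ symOrbitIdeal f :=
  Ideal.subset_span ⟨1, by simp⟩

theorem symOrbitIdeal_le_of_mem {f g : MvPolynomial (Fin N) K} (h : f ∈ symOrbitIdeal g) :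
    symOrbitIdeal f ≤ symOrbitIdeal g :=
  Ideal.span_le.2 fun _ ⟨σ, hσ⟩ => hσ ▸ rename_mem_symOrbitIdeal σ h

theorem prod_X_mem_symOrbitIdeal_prod_X {S T : Finset (Fin N)} (h : #S = #T) :
    ∏ x ∈ T, X x ∈ symOrbitIdeal (∏ x ∈ S, (X x : MvPolynomial (Fin N) K)) := by
  obtain ⟨σ, rfl⟩ := Perm.exists_map_finset_eq S T h
  exact Ideal.subset_span ⟨σ, by simp [map_prod, prod_map]⟩

theorem renameInvariantOn_symOrbitIdeal (f : MvPolynomial (Fin N) K) :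
    RenameInvariantOn univ ((symOrbitIdeal f).restrictScalars K) :=
  fun σ _ _ hp => rename_mem_symOrbitIdeal σ hp

theorem prod_X_mem_symOrbitIdeal {ι : Type*} {V : Finset (Fin N)} {d : ℕ} (hd : #V + d ≤ N)
    (hK : (d ! : K) ≠ 0) {t : Finset ι} {s : ι → Finset (Fin N)} {c : ι → K}
    (hs : ∀ k ∈ t, s k ⊆ V ∧ #(s k) = d) (hc : ∑ k ∈ t, c k ≠ 0) {T : Finset (Fin N)}
    (hT : #T = d) :
    ∏ x ∈ T, X x ∈
      symOrbitIdeal (∑ k ∈ t, c k • ∏ x ∈ s k, (X x : MvPolynomial (Fin N) K)) :=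
  (renameInvariantOn_symOrbitIdeal _).prod_X_mem (subset_univ V) (by simpa using hd) hK hs hc
    (mem_symOrbitIdeal_self _) (subset_univ T) hT

end Orbit

/-- Theorem 1.7 (first part): if `char K = 0` or `char K > n` and `f ∈ K[x_1,…,x_n]` is
homogeneous of degree `d` with only square-free terms and `f(1,…,1) ≠ 0`, then for
`N ≥ n + d`, in `K[x_1,…,x_N]`, `(S_N.f) = (S_N.x_1 ⋯ x_d)`. -/
theorem squarefree_terms_orbit_ideal (K : Type*) [Field K] (n d N : ℕ)
    (hchar : ringChar K = 0 ∨ n < ringChar K)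
    (f : MvPolynomial (Fin n) K) (hf : f.IsHomogeneous d)
    (hsq : ∀ v ∈ f.support, ∀ i, v i ≤ 1)
    (hone : eval (fun _ => (1 : K)) f ≠ 0)
    (hN : n + d ≤ N) :
    symOrbitIdeal (rename (Fin.castLE (by omega : n ≤ N)) f)
      = symOrbitIdeal (∏ i ∈ Finset.univ.filter (fun i : Fin N => (i : ℕ) < d), X i) := by
  let e := Fin.castLEEmb (by omega : n ≤ N)
  have hcard : ∀ v ∈ f.support, #(v.support.map e) = d := fun v hv => by
    rw [card_map, card_support_of_isHomogeneous hf hsq hv]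
  have hrename : rename (Fin.castLE (by omega : n ≤ N)) f
      = ∑ v ∈ f.support, coeff v f • ∏ x ∈ v.support.map e, X x := by
    conv_lhs => rw [eq_sum_smul_prod_X_of_le_one hsq]
    simp [map_sum, map_prod, prod_map, e]
  rw [eval_one_eq_sum_coeff] at hone
  obtain ⟨v, hv⟩ := nonempty_of_sum_ne_zero hone
  have hdn : d ≤ n := by
    rw [← hcard v hv, card_map]
    exact (card_le_univ _).trans_eq (Fintype.card_fin n)
  have hD : #{i : Fin N | (i : ℕ) < d} = d := by rw [Fin.card_filter_val_lt]; omega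
  apply le_antisymm
  · refine symOrbitIdeal_le_of_mem ?_
    rw [hrename]
    exact Ideal.sum_mem _ fun v hv =>
      Submodule.smul_of_tower_mem _ _ (prod_X_mem_symOrbitIdeal_prod_X (by rw [hD, hcard v hv]))
  · refine symOrbitIdeal_le_of_mem ?_
    rw [hrename]
    exact prod_X_mem_symOrbitIdeal (V := univ.map e)
      (by rw [card_map, card_univ, Fintype.card_fin]; omega)
      (natCast_factorial_ne_zero (hchar.imp_right hdn.trans_lt))
      (fun v hv => ⟨map_subset_map.2 (subset_univ _), hcard v hv⟩) hone hD
end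

section
/- Over ℚ, for all 1 ≤ d ≤ n-1 and N = n+d, the following identity of polynomials holds in ℚ[x_1,...,x_{n+d}]: C(n,d) x_1···x_d = ∑_{j=0}^{d} (-1)^j c_j ∑_{J} e_d(x_J), where c_j = C(n-1,d)/C(n-1,d-j) and the inner sum ranges over all n-element subsets J ⊆ {1,...,n+d} with |J ∩ {1,...,d}| = d-j, and e_d(x_J) denotes the elementary symmetric polynomial of degree d in the variables indexed by J. -/
/-!
Write `D = {1, …, d}`. Expanding every `e_d(x_J)` into monomials, the coefficient of `x_T`
(`|T| = d`) on the right is `∑_j (-1)^j c_j N_j(T)`, where `N_j(T)` counts the admissible `J ⊇ T`.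
Splitting `J` into its parts inside and outside `D` gives `N_j(T) = C(s, j) C(n-s, d-j)` with
`s = |T \ D|`. For `s = 0`, i.e. `T = D`, only `j = 0` contributes, and it contributes `C(n, d)`.
For `s ≥ 1` the identity `C(n-s, k) / C(n-1, k) = C(n-1-k, s-1) / C(n-1, s-1)` makes the coefficient
a multiple of `∑_j (-1)^j C(s, j) C(n-1-d+j, s-1)`, an `s`-th forward difference of a polynomial
of degree `s - 1` in `j`, hence zero.
-/

open MvPolynomial

open Finset fwdDiff

theorem Nat.choose_mul_choose_sub_comm (m a b : ℕ) :
    m.choose a * (m - a).choose b = m.choose b * (m - b).choose a := by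
  have h₁ := Nat.choose_mul (n := m) (Nat.le_add_right a b)
  have h₂ := Nat.choose_mul (n := m) (Nat.le_add_left b a)
  rw [Nat.add_sub_cancel_left, Nat.choose_symm_add] at h₁
  rw [Nat.add_sub_cancel] at h₂
  rw [← h₁, h₂]

theorem fwdDiff_iter_choose_add_eq_zero {r s : ℕ} (h : r < s) (M x : ℕ) :
    (Δ_[1])^[s] (fun y ↦ (y + M).choose r : ℕ → ℤ) x = 0 := by
  obtain ⟨k, rfl⟩ := Nat.exists_eq_add_of_lt h
  have hr : (Δ_[1])^[r] (fun y ↦ y.choose r : ℕ → ℤ) = fun _ ↦ 1 := by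
    simpa using fwdDiff_iter_choose 0 r
  rw [fwdDiff_iter_comp_add 1 (fun y ↦ (y.choose r : ℤ)) M,
    show r + k + 1 = k + 1 + r by omega, Function.iterate_add_apply, hr]
  simp [Function.iterate_fixed (fwdDiff_const (1 : ℕ) (0 : ℤ))]

theorem sum_range_neg_one_pow_mul_choose_mul_choose_add {R : Type*} [Ring R]
    {r s L : ℕ} (hrs : r < s) (hsL : s ≤ L) (M : ℕ) :
    ∑ i ∈ range (L + 1), (-1 : R) ^ i * s.choose i * (M + i).choose r = 0 := by
  have hsign : ∀ i ≤ s, (-1 : ℤ) ^ s * (-1) ^ (s - i) = (-1) ^ i := fun i hi ↦ by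
    rw [← pow_add, show s + (s - i) = i + 2 * (s - i) by omega, pow_add, pow_mul]
    simp
  have hfin : ∑ i ∈ range (s + 1), (-1 : ℤ) ^ i * s.choose i * (M + i).choose r = 0 := by
    have h := congrArg ((-1 : ℤ) ^ s * ·) (fwdDiff_iter_choose_add_eq_zero hrs M 0)
    simp only [fwdDiff_iter_eq_sum_shift, mul_sum, mul_zero] at h
    rw [← h]
    refine sum_congr rfl fun i hi ↦ ?_
    rw [← hsign i (Nat.lt_succ_iff.mp (mem_range.mp hi))]
    simp [add_comm, mul_assoc]
  rw [← sum_subset (range_subset_range.mpr (Nat.succ_le_succ hsL)) fun i _ hi ↦ by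
    rw [Nat.choose_eq_zero_of_lt (by simpa using hi)]; simp]
  exact_mod_cast congrArg (Int.cast : ℤ → R) hfin

theorem sum_neg_one_pow_mul_choose_div_choose_mul {K : Type*} [Field K] [CharZero K]
    {n d s : ℕ} (hdn : d ≤ n - 1) (hsd : s ≤ d) :
    ∑ j ∈ range (d + 1), (-1 : K) ^ j * (((n - 1).choose d : K) / (n - 1).choose (d - j))
        * ((s.choose j : K) * (n - s).choose (d - j)) = if s = 0 then (n.choose d : K) else 0 := by
  have hchoose : ∀ {k}, k ≤ n - 1 → ((n - 1).choose k : K) ≠ 0 := fun hk ↦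
    Nat.cast_ne_zero.2 (Nat.choose_pos hk).ne'
  rcases Nat.eq_zero_or_pos s with rfl | hs
  · rw [if_pos rfl, sum_eq_single_of_mem 0 (by simp) fun j _ hj ↦ by
      simp [Nat.choose_eq_zero_of_lt (Nat.pos_of_ne_zero hj)]]
    simp [hchoose hdn]
  rw [if_neg hs.ne']
  have hterm : ∀ j ∈ range (d + 1),
      (-1 : K) ^ j * (((n - 1).choose d : K) / (n - 1).choose (d - j))
        * ((s.choose j : K) * (n - s).choose (d - j)) =
      ((n - 1).choose d / (n - 1).choose (s - 1)) *
        ((-1 : K) ^ j * s.choose j * (n - 1 - d + j).choose (s - 1)) := fun j hj ↦ by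
    have hj := mem_range_succ_iff.1 hj
    have key := Nat.choose_mul_choose_sub_comm (n - 1) (d - j) (s - 1)
    rw [show n - 1 - (d - j) = n - 1 - d + j by omega,
      show n - 1 - (s - 1) = n - s by omega] at key
    have hratio : ((n - s).choose (d - j) : K) / (n - 1).choose (d - j) =
        (n - 1 - d + j).choose (s - 1) / (n - 1).choose (s - 1) := by
      rw [div_eq_div_iff (hchoose (by omega)) (hchoose (by omega))]
      exact_mod_cast (mul_comm _ _).trans (key.symm.trans (mul_comm _ _))
    calc _ = (-1 : K) ^ j * (n - 1).choose d * s.choose j *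
          (((n - s).choose (d - j) : K) / (n - 1).choose (d - j)) := by ring
      _ = _ := by rw [hratio]; ring
  rw [sum_congr rfl hterm, ← mul_sum,
    sum_range_neg_one_pow_mul_choose_mul_choose_add (by omega) hsd, mul_zero]

section Counting

variable {α : Type*} [DecidableEq α]

/-- Counted through complements in `U`: unlike the truncated `m - #S` of
`Finset.card_filter_powersetCard_subset`, the index `#U - m` stays correct when `m < #S`. -/
theorem card_filter_powersetCard_superset {S U : Finset α} {m : ℕ} (hSU : S ⊆ U)
    (hm : m ≤ #U) : #{B ∈ powersetCard m U | S ⊆ B} = (#U - #S).choose (#U - m) := by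
  have hSU' := card_le_card hSU
  by_cases hSm : #S ≤ m
  · rw [card_filter_powersetCard_subset S U m hSU hSm]
    exact Nat.choose_symm_of_eq_add (by omega)
  · rw [Nat.choose_eq_zero_of_lt (by omega), card_eq_zero, filter_eq_empty_iff]
    intro B hB hSB
    exact hSm ((card_le_card hSB).trans (mem_powersetCard.mp hB).2.le)

theorem union_inter_eq_and_union_sdiff_eq {D A B : Finset α} (hA : A ⊆ D) (hB : Disjoint B D) :
    (A ∪ B) ∩ D = A ∧ (A ∪ B) \ D = B :=
  ⟨by rw [union_inter_distrib_right, inter_eq_left.2 hA, disjoint_iff_inter_eq_empty.1 hB,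
      union_empty],
    by rw [union_sdiff_distrib, sdiff_eq_empty_iff_subset.2 hA, hB.sdiff_eq_left, empty_union]⟩

variable [Fintype α]

theorem card_filter_card_inter_eq_and_superset (D T : Finset α) {k n : ℕ} (hkn : k ≤ n) :
    #{J ∈ powersetCard n univ | #(J ∩ D) = k ∧ T ⊆ J} =
      #{A ∈ powersetCard k D | T ∩ D ⊆ A} * #{B ∈ powersetCard (n - k) Dᶜ | T \ D ⊆ B} := by
  rw [← card_product]
  refine card_nbij' (fun J ↦ (J ∩ D, J \ D)) (fun p ↦ p.1 ∪ p.2) ?_ ?_ ?_ ?_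
  · intro J hJ
    simp only [mem_coe, mem_filter, mem_product, mem_powersetCard, subset_univ, true_and] at hJ ⊢
    obtain ⟨hJn, hJD, hTJ⟩ := hJ
    have := card_inter_add_card_sdiff J D
    exact ⟨⟨⟨inter_subset_right, hJD⟩, inter_subset_inter hTJ subset_rfl⟩,
      ⟨⟨subset_compl_iff_disjoint_right.2 sdiff_disjoint, by omega⟩,
        sdiff_subset_sdiff hTJ subset_rfl⟩⟩
  · rintro ⟨A, B⟩ h
    simp only [mem_coe, mem_filter, mem_product, mem_powersetCard, subset_univ, true_and] at h ⊢
    obtain ⟨⟨⟨hAD, hA⟩, hTA⟩, ⟨hBD, hB⟩, hTB⟩ := h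
    have hBD := subset_compl_iff_disjoint_right.1 hBD
    refine ⟨by rw [card_union_of_disjoint (disjoint_of_subset_left hAD hBD.symm)]; omega,
      by rw [(union_inter_eq_and_union_sdiff_eq hAD hBD).1, hA], ?_⟩
    rw [← sup_inf_sdiff T D]
    exact union_subset_union hTA hTB
  · intro J _
    exact sup_inf_sdiff J D
  · rintro ⟨A, B⟩ h
    simp only [mem_coe, mem_filter, mem_product, mem_powersetCard] at h
    exact Prod.ext_iff.2 <|
      union_inter_eq_and_union_sdiff_eq h.1.1.1 (subset_compl_iff_disjoint_right.1 h.2.1.1)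

theorem card_filter_card_inter_eq_and_superset_of_card_eq {D T : Finset α} {n d j : ℕ}
    (hD : #D = d) (hDc : #Dᶜ = n) (hT : #T = d) (hdn : d ≤ n) (hj : j ≤ d) :
    #{J ∈ powersetCard n univ | #(J ∩ D) = d - j ∧ T ⊆ J} =
      (#(T \ D)).choose j * (n - #(T \ D)).choose (d - j) := by
  have hTD := card_inter_add_card_sdiff T D
  rw [card_filter_card_inter_eq_and_superset D T (by omega : d - j ≤ n),
    card_filter_powersetCard_superset inter_subset_right (by omega),
    card_filter_powersetCard_superset (subset_compl_iff_disjoint_right.2 sdiff_disjoint)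
      (by omega), hD, hDc]
  congr 2 <;> omega

end Counting

section Esymm

variable {K : Type*} [Field K] {N : ℕ}

theorem esymmOn_eq_sum_filter_subset (J : Finset (Fin N)) (d : ℕ) :
    esymmOn K J d = ∑ T ∈ powersetCard d univ with T ⊆ J, ∏ i ∈ T, X i := by
  rw [esymmOn]
  congr 1
  ext T
  simp [and_comm]

theorem sum_esymmOn (𝒥 : Finset (Finset (Fin N))) (d : ℕ) :
    ∑ J ∈ 𝒥, esymmOn K J d = ∑ T ∈ powersetCard d univ, #{J ∈ 𝒥 | T ⊆ J} • ∏ i ∈ T, X i := by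
  simp_rw [esymmOn_eq_sum_filter_subset, sum_filter]
  rw [sum_comm]
  simp_rw [← sum_filter, sum_const]

theorem sum_C_mul_sum_esymmOn {ι : Type*} (s : Finset ι) (a : ι → K)
    (𝒥 : ι → Finset (Finset (Fin N))) (d : ℕ) :
    ∑ j ∈ s, C (a j) * ∑ J ∈ 𝒥 j, esymmOn K J d =
      ∑ T ∈ powersetCard d univ, C (∑ j ∈ s, a j * #{J ∈ 𝒥 j | T ⊆ J}) * ∏ i ∈ T, X i := by
  simp_rw [sum_esymmOn, mul_sum]
  rw [sum_comm]
  refine sum_congr rfl fun T _ ↦ ?_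
  rw [map_sum, sum_mul]
  refine sum_congr rfl fun j _ ↦ ?_
  rw [nsmul_eq_mul, map_mul, map_natCast, mul_assoc]

end Esymm

theorem elimination_identity_general (n d : ℕ) (hdn : d ≤ n - 1) :
    (C ((n.choose d : ℚ)) : MvPolynomial (Fin (n + d)) ℚ)
        * ∏ i ∈ Finset.univ.filter (fun i : Fin (n + d) => (i : ℕ) < d), X i
      = ∑ j ∈ Finset.range (d + 1),
          (-1 : MvPolynomial (Fin (n + d)) ℚ) ^ j
            * C (((n - 1).choose d : ℚ) / ((n - 1).choose (d - j) : ℚ))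
            * ∑ J ∈ (Finset.powersetCard n (Finset.univ : Finset (Fin (n + d)))).filter
                (fun J => (J ∩ Finset.univ.filter (fun i : Fin (n + d) => (i : ℕ) < d)).card
                  = d - j),
                esymmOn ℚ J d := by
  set D : Finset (Fin (n + d)) := {i | (i : ℕ) < d}
  have hD : #D = d := by simp [D, Fin.card_filter_val_lt]
  have hDc : #Dᶜ = n := by rw [card_compl, hD, Fintype.card_fin, Nat.add_sub_cancel]
  have hcoeff : ∀ T ∈ powersetCard d univ, ∑ j ∈ range (d + 1),
      (-1 : ℚ) ^ j * (((n - 1).choose d : ℚ) / (n - 1).choose (d - j)) *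
        #{J ∈ {J ∈ powersetCard n univ | #(J ∩ D) = d - j} | T ⊆ J} =
      if T = D then (n.choose d : ℚ) else 0 := by
    intro T hT
    have hT := (mem_powersetCard.1 hT).2
    have hTD : #(T \ D) = 0 ↔ T = D := by
      rw [card_eq_zero, sdiff_eq_empty_iff_subset, subset_iff_eq_of_card_le (by rw [hD, hT])]
    rw [sum_congr rfl fun j hj ↦ by
        rw [filter_filter, card_filter_card_inter_eq_and_superset_of_card_eq hD hDc hT
          (by omega) (mem_range_succ_iff.1 hj), Nat.cast_mul],
      sum_neg_one_pow_mul_choose_div_choose_mul hdn ((card_le_card sdiff_subset).trans hT.le)]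
    exact if_congr hTD rfl rfl
  have hsign : ∀ (j : ℕ) (c : ℚ),
      (-1 : MvPolynomial (Fin (n + d)) ℚ) ^ j * C c = C ((-1) ^ j * c) := by simp
  simp_rw [hsign]
  rw [sum_C_mul_sum_esymmOn, sum_congr rfl fun T hT ↦ by
    rw [hcoeff T hT, apply_ite C, map_zero, ite_mul, zero_mul]]
  rw [sum_ite_eq', if_pos (mem_powersetCard.2 ⟨subset_univ D, hD⟩)]

theorem elimination_identity (n d : ℕ) (hd : 1 ≤ d) (hdn : d ≤ n - 1) :
    (C ((n.choose d : ℚ)) : MvPolynomial (Fin (n + d)) ℚ)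
        * ∏ i ∈ Finset.univ.filter (fun i : Fin (n + d) => (i : ℕ) < d), X i
      = ∑ j ∈ Finset.range (d + 1),
          (-1 : MvPolynomial (Fin (n + d)) ℚ) ^ j
            * C (((n - 1).choose d : ℚ) / ((n - 1).choose (d - j) : ℚ))
            * ∑ J ∈ (Finset.powersetCard n (Finset.univ : Finset (Fin (n + d)))).filter
                (fun J => (J ∩ Finset.univ.filter (fun i : Fin (n + d) => (i : ℕ) < d)).card
                  = d - j),
                esymmOn ℚ J d :=
  elimination_identity_general n d hdn
end

section
/- Let K be a field with char(K) not dividing C(n,d), 1 ≤ d ≤ n, N ≥ n+d, and let y ∈ K^N be a common zero of all S_N-permutations of e_d(x_1,...,x_n). If some value t ∈ K occurs among the coordinates of y at least n times, then t = 0. -/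
open MvPolynomial

/- If `char K ∤ C(n,d)` and `y ∈ K^N` is a common zero of all `S_N`-permutations of
`e_d(x_1,…,x_n)`, then any value `t` occurring at least `n` times among the coordinates
of `y` must be `0`. -/
open scoped Classical in
theorem repeated_value_is_zero (K : Type*) [Field K] (n d N : ℕ)
    (hd : 1 ≤ d) (hdn : d ≤ n) (hN : n + d ≤ N)
    (hchar : ((n.choose d : ℕ) : K) ≠ 0) (y : Fin N → K)
    (hy : ∀ σ : Equiv.Perm (Fin N),
      eval y (rename σ (esymmOn K (Finset.univ.filter (fun i : Fin N => (i : ℕ) < n)) d)) = 0)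
    (t : K) (ht : n ≤ (Finset.univ.filter (fun i : Fin N => y i = t)).card) :
    t = 0 := by
  set A : Finset (Fin N) := Finset.univ.filter (fun i : Fin N => (i : ℕ) < n) with hA
  have hnN : n ≤ N := le_trans (Nat.le_add_right n d) hN
  have hAcard : A.card = n := by
    have : A = Finset.univ.map (Fin.castLEEmb hnN) := by
      ext i
      simp only [hA, Finset.mem_filter, Finset.mem_univ, true_and, Finset.mem_map,
        Fin.castLEEmb_apply]
      constructor
      · intro h
        exact ⟨⟨i, h⟩, by ext; simp⟩
      · rintro ⟨j, rfl⟩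
        exact j.isLt
    simp [this]
  obtain ⟨T, hTsub, hTcard⟩ := Finset.exists_subset_card_eq ht
  have e : {x : Fin N // x ∈ A} ≃ {x : Fin N // x ∈ T} :=
    (Finset.equivOfCardEq (by rw [hAcard, hTcard]))
  set σ : Equiv.Perm (Fin N) := e.extendSubtype with hσ
  have hσmem : ∀ i ∈ A, y (σ i) = t := by
    intro i hi
    have : σ i ∈ T := e.extendSubtype_mem i hi
    have := hTsub this
    simpa using this
  have h0 := hy σ
  rw [eval_rename] at h0
  have : eval (y ∘ σ) (esymmOn K A d) = (n.choose d : K) * t ^ d := by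
    rw [esymmOn, map_sum]
    have hterm : ∀ B ∈ Finset.powersetCard d A,
        eval (y ∘ σ) (∏ i ∈ B, (X i : MvPolynomial (Fin N) K)) = t ^ d := by
      intro B hB
      rw [Finset.mem_powersetCard] at hB
      rw [map_prod]
      calc (∏ i ∈ B, eval (y ∘ σ) (X i : MvPolynomial (Fin N) K))
          = ∏ i ∈ B, t := Finset.prod_congr rfl (fun i hi => by
            simp [hσmem i (hB.1 hi)])
        _ = t ^ d := by rw [Finset.prod_const, hB.2]
    rw [Finset.sum_congr rfl hterm, Finset.sum_const, Finset.card_powersetCard, hAcard,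
      nsmul_eq_mul]
  rw [this] at h0
  have htd : t ^ d = 0 := by
    rcases mul_eq_zero.mp h0 with h | h
    · exact absurd h hchar
    · exact h
  exact pow_eq_zero_iff (by omega) |>.mp htd
end
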